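/- arXiv:0908.2885 — 10 statements merged into one kernel-verified Lean document; each statement's English description precedes it below -/
import Mathlib

section
/- For any three distinct elements a, b, c of X, at most one of the three relations ab||c, ac||b and bc||a holds. -/
open Relation

variable {V : Type*}

/-- `u ⪯ v` : the reflexive–transitive closure of the arc relation `E`. -/
def preceq (E : V → V → Prop) : V → V → Prop := Relation.ReflTransGen E

/-- `u ≺ v` : `u ⪯ v` and `u ≠ v`. -/
def precLT (E : V → V → Prop) (u v : V) : Prop := preceq E u v ∧ u ≠ v

/-- the set of common ancestors of `a` and `b`. -/
def ca (E : V → V → Prop) (a b : V) : Set V := {v | preceq E v a ∧ preceq E v b}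

/-- the set of most recent common ancestors of `a` and `b`:
the maximal elements of `ca E a b` with respect to `⪯`. -/
def mrca (E : V → V → Prop) (a b : V) : Set V :=
  {v | v ∈ ca E a b ∧ ∀ w ∈ ca E a b, preceq E v w → v = w}

/-- the set of descendants of `v` lying in `X`. -/
def desc (E : V → V → Prop) (X : Set V) (v : V) : Set V := {x | x ∈ X ∧ preceq E v x}

/-- `D(=C)` : the vertices whose set of descendants in `X` is exactly `C`. -/
def Deq (E : V → V → Prop) (X C : Set V) : Set V := {v | desc E X v = C}

/-- `D(⊆C)` : the vertices all of whose descendants in `X` lie in `C`. -/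
def Dsub (E : V → V → Prop) (X C : Set V) : Set V := {v | desc E X v ⊆ C}

/-- `S` separates `A` from `B`: every path in the underlying undirected graph of
`E` from an element of `A` to an element of `B` passes through some element of `S`. -/
def Separates (E : V → V → Prop) (S A B : Set V) : Prop :=
  ∀ x ∈ A, ∀ y ∈ B, x ∉ S →
    ¬ Relation.ReflTransGen (fun u v => (E u v ∨ E v u) ∧ v ∉ S) x y

/-- `C` is a tight `X`-cluster: it is a nonempty subset of `X` such that
`D(=C)` separates `C` from `X − C`. -/
def TightCluster (E : V → V → Prop) (X C : Set V) : Prop :=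
  C.Nonempty ∧ C ⊆ X ∧ Separates E (Deq E X C) C (X \ C)

/-- adjacency in the cousinship graph `Γ(C)`. -/
def cousinAdj (E : V → V → Prop) (X C : Set V) (x y : V) : Prop :=
  x ≠ y ∧ x ∈ C ∧ y ∈ C ∧
    ∃ v ∈ Dsub E X C, x ∈ desc E X v ∧ y ∈ desc E X v

/-- `C` is a strict `X`-cluster. -/
def StrictCluster (E : V → V → Prop) (X C : Set V) : Prop :=
  C ⊆ X ∧
  (∀ v : V, (C ∩ desc E X v).Nonempty → C ⊆ desc E X v ∨ desc E X v ⊆ C) ∧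
  (∀ x ∈ C, ∀ y ∈ C, Relation.ReflTransGen (cousinAdj E X C) x y)

/-- the relation `ab‖c`. -/
def relPar (E : V → V → Prop) (a b c : V) : Prop :=
  (ca E a b).Nonempty ∧ ∀ v ∈ mrca E a b,
    (∃ v' ∈ mrca E a c, precLT E v' v) ∧ (∃ v'' ∈ mrca E b c, precLT E v'' v)

/-- the relation `ab|c`. -/
def relBar (E : V → V → Prop) (a b c : V) : Prop :=
  (ca E a b).Nonempty ∧ ∀ v ∈ mrca E a b,
    ∃ v' ∈ mrca E a c ∪ mrca E b c, precLT E v' v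

/-- the relation `ab ⊥ c`. -/
def relPerp (E : V → V → Prop) (a b c : V) : Prop :=
  (ca E a c).Nonempty ∧ (ca E b c).Nonempty ∧
  ∀ v ∈ mrca E a c, ∀ v' ∈ mrca E b c,
    ∃ u ∈ mrca E a b, ∃ u' ∈ mrca E a b, precLT E v u ∧ precLT E v' u'

/-- `C` is an ancestral `X`-cluster. -/
def AncestralCluster (E : V → V → Prop) (X C : Set V) : Prop :=
  C ⊆ X ∧ ∀ x ∈ C, ∀ x' ∈ C, ∀ y ∈ X \ C, relPar E x x' y

/-- `C` is a relaxed ancestral `X`-cluster. -/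
def RelaxedAncestralCluster (E : V → V → Prop) (X C : Set V) : Prop :=
  C ⊆ X ∧ ∀ x ∈ C, ∀ x' ∈ C, ∀ y ∈ X \ C, relBar E x x' y

/-- `C` is a co-ancestral `X`-cluster. -/
def CoAncestralCluster (E : V → V → Prop) (X C : Set V) : Prop :=
  C ⊆ X ∧ ∀ x ∈ C, ∀ x' ∈ C, ∀ y ∈ X \ C, relPerp E x x' y

/-- `C` is an Apresjan `X`-cluster relative to `T`. -/
def ApresjanCluster (E : V → V → Prop) (X : Set V) (T : V → ℝ) (C : Set V) : Prop :=
  C ⊆ X ∧ ∃ t : ℝ,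
    (∀ x ∈ C, ∀ y ∈ C, ∃ v : V, preceq E v x ∧ preceq E v y ∧ t ≤ T v) ∧
    (∀ x ∈ C, ∀ y ∈ X \ C, ∀ v : V, preceq E v x → preceq E v y → T v < t)

/-- `C` is a strong Apresjan `X`-cluster relative to `T`. -/
def StrongApresjanCluster (E : V → V → Prop) (X : Set V) (T : V → ℝ) (C : Set V) : Prop :=
  C ⊆ X ∧ ∃ t : ℝ,
    (∀ x ∈ C, ∀ y ∈ C, ∀ v ∈ mrca E x y, t ≤ T v) ∧
    (∀ x ∈ C, ∀ y ∈ X \ C, ∀ v : V, preceq E v x → preceq E v y → T v < t)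


lemma ca_symm' (E : V → V → Prop) (a b : V) : ca E a b = ca E b a := by
  ext v; exact and_comm

lemma mrca_symm' (E : V → V → Prop) (a b : V) : mrca E a b = mrca E b a := by
  unfold mrca; rw [ca_symm']

lemma exists_mrca' [Fintype V] {E : V → V → Prop}
    (hacyc : Irreflexive (Relation.TransGen E)) {a b : V}
    (h : (ca E a b).Nonempty) : (mrca E a b).Nonempty := by
  haveI : IsTrans V (fun x y => Relation.TransGen E y x) :=
    ⟨fun x y z h1 h2 => Relation.TransGen.trans h2 h1⟩
  haveI : IsIrrefl V (fun x y => Relation.TransGen E y x) := ⟨fun x => hacyc x⟩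
  have hwf : WellFounded (fun x y : V => Relation.TransGen E y x) :=
    Finite.wellFounded_of_trans_of_irrefl _
  obtain ⟨m, hm, hmin⟩ := hwf.has_min (ca E a b) h
  refine ⟨m, hm, fun w hw hle => ?_⟩
  by_contra hne
  exact hmin w hw ((Relation.reflTransGen_iff_eq_or_transGen.mp hle).resolve_left
    (fun h' => hne h'.symm))

lemma chain_contra' {E : V → V → Prop}
    (hacyc : Irreflexive (Relation.TransGen E)) {a b u w v : V}
    (hu : u ∈ mrca E a b) (hv : v ∈ ca E a b)
    (h1 : precLT E u w) (h2 : precLT E w v) : False := by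
  have huv : preceq E u v := Relation.ReflTransGen.trans h1.1 h2.1
  have heq : u = v := hu.2 v hv huv
  subst heq
  have h1' : Relation.TransGen E u w :=
    (Relation.reflTransGen_iff_eq_or_transGen.mp h1.1).resolve_left
      (fun h' => h1.2 h'.symm)
  exact hacyc w (Relation.TransGen.trans_right h2.1 h1')

/-- For any three distinct elements a, b, c of X, at most one of the
three relations ab‖c, ac‖b and bc‖a holds. -/
theorem at_most_one_relPar [Fintype V] (E : V → V → Prop) (X : Set V)
    (hacyc : Irreflexive (Relation.TransGen E))
    (a b c : V) (ha : a ∈ X) (hb : b ∈ X) (hc : c ∈ X)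
    (hab : a ≠ b) (hac : a ≠ c) (hbc : b ≠ c) :
    ¬ (relPar E a b c ∧ relPar E a c b) ∧
    ¬ (relPar E a b c ∧ relPar E b c a) ∧
    ¬ (relPar E a c b ∧ relPar E b c a) := by
  constructor
  · rintro ⟨h1, h2⟩
    obtain ⟨v, hv⟩ := exists_mrca' hacyc h1.1
    obtain ⟨⟨v', hv', hlt'⟩, -⟩ := h1.2 v hv
    obtain ⟨⟨u, hu, hlt⟩, -⟩ := h2.2 v' hv'
    exact chain_contra' hacyc hu hv.1 hlt hlt'
  constructor
  · rintro ⟨h1, h2⟩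
    obtain ⟨v, hv⟩ := exists_mrca' hacyc h1.1
    obtain ⟨-, ⟨v', hv', hlt'⟩⟩ := h1.2 v hv
    obtain ⟨⟨u, hu, hlt⟩, -⟩ := h2.2 v' hv'
    rw [mrca_symm'] at hu
    exact chain_contra' hacyc hu hv.1 hlt hlt'
  · rintro ⟨h1, h2⟩
    obtain ⟨v, hv⟩ := exists_mrca' hacyc h1.1
    obtain ⟨-, ⟨v', hv', hlt'⟩⟩ := h1.2 v hv
    rw [mrca_symm'] at hv'
    obtain ⟨-, ⟨u, hu, hlt⟩⟩ := h2.2 v' hv'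
    rw [mrca_symm'] at hu
    exact chain_contra' hacyc hu hv.1 hlt hlt'
end

section
/- For any three distinct elements a, b, c of X, at most two of the three relations ab|c, ac|b and bc|a hold (i.e. they cannot all hold simultaneously). -/
open Relation

variable {V : Type*}

lemma preceq_transGen {E : V → V → Prop} {u v : V} (h : preceq E u v) (hne : u ≠ v) :
    Relation.TransGen E u v := by
  rcases (Relation.reflTransGen_iff_eq_or_transGen).1 h with h | h
  · exact absurd h.symm hne
  · exact h

lemma precLT_trans {E : V → V → Prop} (hacyc : Irreflexive (Relation.TransGen E))
    {x y z : V} (h1 : precLT E x y) (h2 : precLT E y z) : precLT E x z := by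
  refine ⟨h1.1.trans h2.1, ?_⟩
  rintro rfl
  exact hacyc x ((preceq_transGen h1.1 h1.2).trans (preceq_transGen h2.1 h2.2))

lemma precLT_wf [Fintype V] (E : V → V → Prop) (hacyc : Irreflexive (Relation.TransGen E)) :
    WellFounded (precLT E) := by
  have ht : IsTrans V (precLT E) := ⟨fun _ _ _ h1 h2 => precLT_trans hacyc h1 h2⟩
  have hi : IsIrrefl V (precLT E) := ⟨fun x h => h.2 rfl⟩
  exact Finite.wellFounded_of_trans_of_irrefl _

lemma precLT_flip_wf [Fintype V] (E : V → V → Prop)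
    (hacyc : Irreflexive (Relation.TransGen E)) :
    WellFounded (fun u v => precLT E v u) := by
  have ht : IsTrans V (fun u v => precLT E v u) :=
    ⟨fun _ _ _ h1 h2 => precLT_trans hacyc h2 h1⟩
  have hi : IsIrrefl V (fun u v => precLT E v u) := ⟨fun x h => h.2 rfl⟩
  exact Finite.wellFounded_of_trans_of_irrefl _

lemma ca_comm (E : V → V → Prop) (x y : V) : ca E x y = ca E y x := by
  ext v; exact And.comm

lemma mrca_comm (E : V → V → Prop) (x y : V) : mrca E x y = mrca E y x := by
  unfold mrca; rw [ca_comm]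

lemma mrca_nonempty [Fintype V] {E : V → V → Prop}
    (hacyc : Irreflexive (Relation.TransGen E)) {x y : V}
    (h : (ca E x y).Nonempty) : (mrca E x y).Nonempty := by
  obtain ⟨m, hm, hmin⟩ := (precLT_flip_wf E hacyc).has_min (ca E x y) h
  refine ⟨m, hm, fun w hw hpw => ?_⟩
  by_contra hne
  exact hmin w hw ⟨hpw, hne⟩

/-- For any three distinct elements a, b, c of X, at most two of the
three relations ab|c, ac|b and bc|a hold (they cannot all hold simultaneously). -/
theorem at_most_two_relBar [Fintype V] (E : V → V → Prop) (X : Set V)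
    (hacyc : Irreflexive (Relation.TransGen E))
    (a b c : V) (ha : a ∈ X) (hb : b ∈ X) (hc : c ∈ X)
    (hab : a ≠ b) (hac : a ≠ c) (hbc : b ≠ c) :
    ¬ (relBar E a b c ∧ relBar E a c b ∧ relBar E b c a) := by
  rintro ⟨⟨hcab, h1⟩, ⟨hcac, h2⟩, ⟨hcbc, h3⟩⟩
  set S : Set V := mrca E a b ∪ mrca E a c ∪ mrca E b c with hS
  have hSne : S.Nonempty := by
    obtain ⟨m, hm⟩ := mrca_nonempty hacyc hcab
    exact ⟨m, Or.inl (Or.inl hm)⟩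
  obtain ⟨m, hm, hmin⟩ := (precLT_wf E hacyc).has_min S hSne
  rcases hm with (hm | hm) | hm
  · obtain ⟨v', hv', hlt⟩ := h1 m hm
    rcases hv' with hv' | hv'
    · exact hmin v' (Or.inl (Or.inr hv')) hlt
    · exact hmin v' (Or.inr hv') hlt
  · obtain ⟨v', hv', hlt⟩ := h2 m hm
    rcases hv' with hv' | hv'
    · exact hmin v' (Or.inl (Or.inl hv')) hlt
    · rw [mrca_comm] at hv'
      exact hmin v' (Or.inr hv') hlt
  · obtain ⟨v', hv', hlt⟩ := h3 m hm
    rcases hv' with hv' | hv'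
    · rw [mrca_comm] at hv'
      exact hmin v' (Or.inl (Or.inl hv')) hlt
    · rw [mrca_comm] at hv'
      exact hmin v' (Or.inl (Or.inr hv')) hlt
end

section
/- The set of strict X-clusters of G forms a hierarchy: if C₁ and C₂ are strict X-clusters then C₁ ∩ C₂ ∈ {∅, C₁, C₂}. -/
open Relation

variable {V : Type*}

lemma cross_edge {V : Type*} {R : V → V → Prop} {S : Set V} :
    ∀ {a b : V}, Relation.ReflTransGen R a b → a ∈ S → b ∉ S →
    ∃ x y, R x y ∧ x ∈ S ∧ y ∉ S := by
  intro a b h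
  induction h with
  | refl => intro ha hb; exact absurd ha hb
  | @tail c d h' r ih =>
    intro ha hd
    by_cases hc : c ∈ S
    · exact ⟨c, d, r, hc, hd⟩
    · exact ih ha hc

/-- The set of strict X-clusters of G forms a hierarchy. -/
theorem strict_clusters_hierarchy [Fintype V] (E : V → V → Prop) (X : Set V)
    (hacyc : Irreflexive (Relation.TransGen E))
    (C₁ C₂ : Set V) (h1 : StrictCluster E X C₁) (h2 : StrictCluster E X C₂) :
    C₁ ∩ C₂ = ∅ ∨ C₁ ∩ C₂ = C₁ ∨ C₁ ∩ C₂ = C₂ := by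
  by_cases hne : (C₁ ∩ C₂) = ∅
  · exact Or.inl hne
  by_cases h12 : C₁ ⊆ C₂
  · exact Or.inr (Or.inl (by rw [Set.inter_eq_left.mpr h12]))
  by_cases h21 : C₂ ⊆ C₁
  · exact Or.inr (Or.inr (by rw [Set.inter_eq_right.mpr h21]))
  exfalso
  obtain ⟨z, hz1, hz2⟩ := Set.nonempty_iff_ne_empty.mpr hne
  obtain ⟨a, ha1, ha2⟩ := Set.not_subset.mp h12
  obtain ⟨b, hb2, hb1⟩ := Set.not_subset.mp h21
  obtain ⟨-, hcond1, hconn1⟩ := h1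
  obtain ⟨-, hcond2, -⟩ := h2
  -- path in Γ(C₁) from z (∈ C₂) to a (∉ C₂)
  have hpath := hconn1 z hz1 a ha1
  obtain ⟨x, y, hadj, hxS, hyS⟩ := cross_edge hpath hz2 ha2
  obtain ⟨-, hxC1, hyC1, v, hv, hxd, hyd⟩ := hadj
  have : (C₂ ∩ desc E X v).Nonempty := ⟨x, hxS, hxd⟩
  rcases hcond2 v this with hsub | hsub
  · exact hb1 (hv (hsub hb2))
  · exact hyS (hsub hyd)
end

section
/- The set of co-ancestral X-clusters of G forms a hierarchy: if C₁ and C₂ are co-ancestral X-clusters then C₁ ∩ C₂ ∈ {∅, C₁, C₂}. -/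
open Relation

variable {V : Type*}

/-! A common vertex `x ∈ C₁ ∩ C₂` together with `a ∈ C₁ \ C₂` and `b ∈ C₂ \ C₁` gives
`xa ⊥ b` and `xb ⊥ a`. The first puts every most recent common ancestor of `x` and `b`
strictly below one of `x` and `a`, the second puts each of those strictly below one of `x` and
`b`; composing, some element of `mrca x b` lies strictly below another, contradicting
maximality. -/

section

variable {E : V → V → Prop} {a b u v x : V}

lemma transGen_of_precLT (h : precLT E u v) : TransGen E u v :=
  (reflTransGen_iff_eq_or_transGen.mp h.1).resolve_left h.2.symm

lemma not_transGen_of_mem_mrca (hacyc : ∀ v, ¬ TransGen E v v) (hv : v ∈ mrca E a b)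
    (hu : u ∈ ca E a b) : ¬ TransGen E v u := fun hvu =>
  hacyc v (hv.2 u hu hvu.to_reflTransGen ▸ hvu)

lemma mrca_nonempty_s6 [Finite V] (hacyc : ∀ v, ¬ TransGen E v v)
    (h : (ca E a b).Nonempty) : (mrca E a b).Nonempty := by
  have : Std.Irrefl (TransGen (flip E)) := ⟨fun v hv => hacyc v (transGen_swap.mp hv)⟩
  obtain ⟨m, hm, hmax⟩ :=
    (Finite.wellFounded_of_trans_of_irrefl (TransGen (flip E))).has_min _ h
  refine ⟨m, hm, fun w hw hmw => ?_⟩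
  rcases reflTransGen_iff_eq_or_transGen.mp hmw with rfl | hmw
  · rfl
  · exact absurd (transGen_swap.mpr hmw) (hmax w hw)

lemma relPerp.exists_mrca_above [Finite V] (hacyc : ∀ v, ¬ TransGen E v v)
    (h : relPerp E x a b) (hv : v ∈ mrca E x b) : ∃ u ∈ mrca E x a, TransGen E v u := by
  obtain ⟨-, hab, hperp⟩ := h
  obtain ⟨w, hw⟩ := mrca_nonempty_s6 hacyc hab
  obtain ⟨u, hu, -, -, hvu, -⟩ := hperp v hv w hw
  exact ⟨u, hu, transGen_of_precLT hvu⟩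

end

/-- The set of co-ancestral X-clusters of G forms a hierarchy. -/
theorem coancestral_clusters_hierarchy [Fintype V] (E : V → V → Prop) (X : Set V)
    (hacyc : Irreflexive (Relation.TransGen E))
    (C₁ C₂ : Set V) (h1 : CoAncestralCluster E X C₁) (h2 : CoAncestralCluster E X C₂) :
    C₁ ∩ C₂ = ∅ ∨ C₁ ∩ C₂ = C₁ ∨ C₁ ∩ C₂ = C₂ := by
  by_contra! h
  obtain ⟨⟨x, hx1, hx2⟩, hn1, hn2⟩ := h
  obtain ⟨a, ha1, ha2⟩ := Set.not_subset.mp (mt Set.inter_eq_left.mpr hn1)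
  obtain ⟨b, hb2, hb1⟩ := Set.not_subset.mp (mt Set.inter_eq_right.mpr hn2)
  have hxab : relPerp E x a b := h1.2 x hx1 a ha1 b ⟨h2.1 hb2, hb1⟩
  have hxba : relPerp E x b a := h2.2 x hx2 b hb2 a ⟨h1.1 ha1, ha2⟩
  obtain ⟨v, hv⟩ := mrca_nonempty_s6 hacyc hxab.1
  obtain ⟨u, hu, hvu⟩ := hxab.exists_mrca_above hacyc hv
  obtain ⟨w, hw, huw⟩ := hxba.exists_mrca_above hacyc hu
  exact not_transGen_of_mem_mrca hacyc hv hw.1 (hvu.trans huw)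
end

section
/- Let (G,T) be a valuated digraph on X. The set of Apresjan X-clusters relative to T forms a hierarchy: if C₁ and C₂ are Apresjan X-clusters relative to T then C₁ ∩ C₂ ∈ {∅, C₁, C₂}. -/
open Relation

variable {V : Type*}

/-- For a valuated digraph (G,T) on X, the set of Apresjan X-clusters
relative to T forms a hierarchy. -/
theorem apresjan_clusters_hierarchy [Fintype V] (E : V → V → Prop) (X : Set V)
    (hacyc : Irreflexive (Relation.TransGen E))
    (T : V → ℝ) (hT : ∀ u v : V, precLT E u v → T u < T v)
    (C₁ C₂ : Set V) (h1 : ApresjanCluster E X T C₁) (h2 : ApresjanCluster E X T C₂) :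
    C₁ ∩ C₂ = ∅ ∨ C₁ ∩ C₂ = C₁ ∨ C₁ ∩ C₂ = C₂ := by
  rcases Set.eq_empty_or_nonempty (C₁ ∩ C₂) with he | ⟨z, hz1, hz2⟩
  · exact Or.inl he
  obtain ⟨hX1, t₁, hA1, hB1⟩ := h1
  obtain ⟨hX2, t₂, hA2, hB2⟩ := h2
  by_cases hsub1 : C₁ ⊆ C₂
  · exact Or.inr (Or.inl (by rw [Set.inter_eq_left]; exact hsub1))
  by_cases hsub2 : C₂ ⊆ C₁
  · exact Or.inr (Or.inr (by rw [Set.inter_eq_right]; exact hsub2))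
  exfalso
  obtain ⟨x, hx1, hx2⟩ := Set.not_subset.mp hsub1
  obtain ⟨y, hy2, hy1⟩ := Set.not_subset.mp hsub2
  obtain ⟨v, hvx, hvz, hv⟩ := hA1 x hx1 z hz1
  have h12 : t₁ < t₂ := lt_of_le_of_lt hv (hB2 z hz2 x ⟨hX1 hx1, hx2⟩ v hvz hvx)
  obtain ⟨w, hwy, hwz, hw⟩ := hA2 y hy2 z hz2
  exact absurd (lt_of_le_of_lt hw (hB1 z hz1 y ⟨hX2 hy2, hy1⟩ w hwz hwy)) (not_lt.mpr h12.le)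
end

section
/- Assume connectivity condition (C2): for all x, y ∈ X there exists v ∈ V with v ⪯ x and v ⪯ y. Then every tight X-cluster of G is a co-ancestral X-cluster of G. -/
open Relation

variable {V : Type*}

theorem preceq_antisymm (E : V → V → Prop) (hacyc : Irreflexive (Relation.TransGen E))
    {a b : V} (h1 : preceq E a b) (h2 : preceq E b a) : a = b := by
  rcases (Relation.reflTransGen_iff_eq_or_transGen.mp h1) with rfl | h1'
  · rfl
  rcases (Relation.reflTransGen_iff_eq_or_transGen.mp h2) with rfl | h2'
  · rfl
  exact absurd (h1'.trans h2') (hacyc a)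

/-- Reversed path in the symmetrized graph avoiding `S`. -/
theorem path_rev (E : V → V → Prop) (S : Set V) {a b : V}
    (h : Relation.ReflTransGen E a b) :
    (∀ w, preceq E a w → preceq E w b → w ∉ S) →
    Relation.ReflTransGen (fun u v => (E u v ∨ E v u) ∧ v ∉ S) b a := by
  induction h with
  | refl => intro _; exact Relation.ReflTransGen.refl
  | @tail c b hac hcb ih =>
    intro hcond
    refine Relation.ReflTransGen.head ⟨Or.inr hcb, ?_⟩ (ih ?_)
    · exact hcond c hac (Relation.ReflTransGen.single hcb)
    · exact fun w hw1 hw2 => hcond w hw1 (hw2.tail hcb)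

/-- Forward path in the symmetrized graph avoiding `S`. -/
theorem path_fwd (E : V → V → Prop) (S : Set V) {a b : V}
    (h : Relation.ReflTransGen E a b) :
    (∀ w, preceq E a w → preceq E w b → w ∉ S) →
    Relation.ReflTransGen (fun u v => (E u v ∨ E v u) ∧ v ∉ S) a b := by
  induction h with
  | refl => intro _; exact Relation.ReflTransGen.refl
  | @tail c b hac hcb ih =>
    intro hcond
    refine Relation.ReflTransGen.tail (ih ?_) ⟨Or.inl hcb, ?_⟩
    · exact fun w hw1 hw2 => hcond w hw1 (hw2.tail hcb)
    · exact hcond b (hac.tail hcb) Relation.ReflTransGen.refl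

/-- Any common ancestor of `a` and `y` (with `a ∈ C`, `y ∈ X \ C`) has a `Deq`-vertex
between it and `a`. -/
theorem exists_Deq_between (E : V → V → Prop) (X C : Set V)
    (hC : TightCluster E X C) {a y v : V} (ha : a ∈ C) (hy : y ∈ X \ C)
    (hva : preceq E v a) (hvy : preceq E v y) :
    ∃ w, preceq E v w ∧ preceq E w a ∧ w ∈ Deq E X C := by
  by_contra hcon
  push_neg at hcon
  have hnoS : ∀ w, preceq E v w → preceq E w a → w ∉ Deq E X C := hcon
  have p1 : Relation.ReflTransGen (fun u w => (E u w ∨ E w u) ∧ w ∉ Deq E X C) a v :=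
    path_rev E _ hva hnoS
  have p2 : Relation.ReflTransGen (fun u w => (E u w ∨ E w u) ∧ w ∉ Deq E X C) v y := by
    refine path_fwd E _ hvy ?_
    intro w _ hwy hwD
    have : y ∈ desc E X w := ⟨hy.1, hwy⟩
    rw [hwD] at this
    exact hy.2 this
  exact hC.2.2 a ha y hy (hnoS a hva Relation.ReflTransGen.refl) (p1.trans p2)

/-- Every common ancestor lies below a most recent common ancestor (finite DAG). -/
theorem exists_mrca_above [Fintype V] (E : V → V → Prop)
    (hacyc : Irreflexive (Relation.TransGen E)) {x x' w : V} (hw : w ∈ ca E x x') :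
    ∃ u ∈ mrca E x x', preceq E w u := by
  have wf : WellFounded (fun a b : V => precLT E b a) := by
    haveI : IsTrans V (fun a b : V => precLT E b a) := by
      constructor
      intro a b c hba hcb
      refine ⟨hcb.1.trans hba.1, ?_⟩
      rintro rfl
      exact hba.2 (preceq_antisymm E hacyc hba.1 hcb.1)
    haveI : IsIrrefl V (fun a b : V => precLT E b a) := ⟨fun a h => h.2 rfl⟩
    exact Finite.wellFounded_of_trans_of_irrefl _
  obtain ⟨m, ⟨hmca, hwm⟩, hmax⟩ :=
    wf.has_min {u | u ∈ ca E x x' ∧ preceq E w u} ⟨w, hw, Relation.ReflTransGen.refl⟩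
  refine ⟨m, ⟨hmca, ?_⟩, hwm⟩
  intro z hz hmz
  by_contra hne
  exact hmax z ⟨hz, hwm.trans hmz⟩ ⟨hmz, hne⟩

/-- Under connectivity condition (C2), every tight X-cluster of G is a
co-ancestral X-cluster of G. -/
theorem tight_is_coancestral [Fintype V] (E : V → V → Prop) (X : Set V)
    (hacyc : Irreflexive (Relation.TransGen E))
    (hC2 : ∀ x ∈ X, ∀ y ∈ X, ∃ v : V, preceq E v x ∧ preceq E v y)
    (C : Set V) (hC : TightCluster E X C) :
    CoAncestralCluster E X C := by
  obtain ⟨hCne, hCX, hsep⟩ := hC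
  refine ⟨hCX, ?_⟩
  intro x hx x' hx' y hy
  -- a common abstract step: from v ∈ mrca a y with a ∈ C, get u ∈ mrca x x' with v ≺ u
  have key : ∀ a ∈ C, ∀ v ∈ mrca E a y, ∃ u ∈ mrca E x x', precLT E v u := by
    intro a ha v hv
    obtain ⟨w, hvw, _, hwD⟩ :=
      exists_Deq_between E X C ⟨hCne, hCX, hsep⟩ ha hy hv.1.1 hv.1.2
    have hwD' : desc E X w = C := hwD
    have hwx : preceq E w x := by
      have : x ∈ desc E X w := hwD' ▸ hx
      exact this.2
    have hwx' : preceq E w x' := by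
      have : x' ∈ desc E X w := hwD' ▸ hx'
      exact this.2
    have hvw_ne : v ≠ w := by
      rintro rfl
      have : y ∈ desc E X v := ⟨hy.1, hv.1.2⟩
      rw [hwD'] at this
      exact hy.2 this
    obtain ⟨u, hu, hwu⟩ := exists_mrca_above E hacyc (⟨hwx, hwx'⟩ : w ∈ ca E x x')
    refine ⟨u, hu, hvw.trans hwu, ?_⟩
    rintro rfl
    exact hvw_ne (hu.2 w ⟨hwx, hwx'⟩ hvw)
  refine ⟨?_, ?_, ?_⟩
  · obtain ⟨v, h1, h2⟩ := hC2 x (hCX hx) y hy.1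
    exact ⟨v, h1, h2⟩
  · obtain ⟨v, h1, h2⟩ := hC2 x' (hCX hx') y hy.1
    exact ⟨v, h1, h2⟩
  · intro v hv v' hv'
    obtain ⟨u, hu, hvu⟩ := key x hx v hv
    obtain ⟨u', hu', hvu'⟩ := key x' hx' v' hv'
    exact ⟨u, hu, u', hu', hvu, hvu'⟩
end

section
/- Let (G,T) be a valuated digraph on X, and let C be a tight X-cluster of G with D(=C) ≠ ∅. Then C is an Apresjan X-cluster relative to T; in fact, conditions (T1) and (T2) hold for t = max{T(v) : v ∈ D(=C)}. -/
open Relation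

variable {V : Type*}

/-!
Every vertex of `D(=C)` is a common ancestor of all of `C`, which gives (T1) for any `t` in
`T '' D(=C)`. For (T2), let `v` be a common ancestor of `x ∈ C` and `y ∈ X − C`. The undirected
walk from `x` up to `v` and down to `y` must meet `D(=C)`, and it cannot do so on the way down,
since no vertex of `D(=C)` is an ancestor of `y`. So `v ⪯ w` for some `w ∈ D(=C)`, with `v ≠ w`
because `v` is an ancestor of `y`; hence `T v < T w ≤ max T(D(=C))`.
-/

/-- A step of the underlying undirected graph of `E` into a vertex outside `S`; walks along it
are those of `Separates`, which avoid `S` except possibly at their start. -/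
def AvoidingAdj (E : V → V → Prop) (S : Set V) (u v : V) : Prop :=
  (E u v ∨ E v u) ∧ v ∉ S

section Walks

variable {E : V → V → Prop} {S : Set V} {v x : V}

theorem exists_mem_or_reflTransGen_avoidingAdj (h : ReflTransGen E v x) :
    (∃ w ∈ S, ReflTransGen E v w ∧ ReflTransGen E w x) ∨ ReflTransGen (AvoidingAdj E S) v x := by
  induction h with
  | refl => exact Or.inr .refl
  | @tail b c hvb hbc ih =>
    rcases ih with ⟨w, hw, hvw, hwb⟩ | hwalk
    · exact Or.inl ⟨w, hw, hvw, hwb.tail hbc⟩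
    · by_cases hc : c ∈ S
      · exact Or.inl ⟨c, hc, hvb.tail hbc, .refl⟩
      · exact Or.inr (hwalk.tail ⟨Or.inl hbc, hc⟩)

theorem exists_mem_or_reflTransGen_avoidingAdj_rev (h : ReflTransGen E v x) :
    (∃ w ∈ S, ReflTransGen E v w ∧ ReflTransGen E w x) ∨ ReflTransGen (AvoidingAdj E S) x v := by
  induction h with
  | refl => exact Or.inr .refl
  | @tail b c hvb hbc ih =>
    rcases ih with ⟨w, hw, hvw, hwb⟩ | hwalk
    · exact Or.inl ⟨w, hw, hvw, hwb.tail hbc⟩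
    · by_cases hb : b ∈ S
      · exact Or.inl ⟨b, hb, hvb, .single hbc⟩
      · exact Or.inr (hwalk.head ⟨Or.inr hbc, hb⟩)

end Walks

section Clusters

variable {E : V → V → Prop} {X C : Set V} {v w x y : V}

theorem preceq_of_mem_Deq (hw : w ∈ Deq E X C) (hx : x ∈ C) : preceq E w x :=
  ((hw : desc E X w = C) ▸ hx : x ∈ desc E X w).2

theorem not_preceq_of_mem_Deq (hw : w ∈ Deq E X C) (hy : y ∈ X \ C) : ¬ preceq E w y :=
  fun hwy => hy.2 ((hw : desc E X w = C) ▸ (⟨hy.1, hwy⟩ : y ∈ desc E X w))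

theorem TightCluster.exists_mem_Deq_precLT (hC : TightCluster E X C) (hx : x ∈ C)
    (hy : y ∈ X \ C) (hvx : preceq E v x) (hvy : preceq E v y) :
    ∃ w ∈ Deq E X C, precLT E v w := by
  suffices ∃ w ∈ Deq E X C, preceq E v w by
    obtain ⟨w, hw, hvw⟩ := this
    exact ⟨w, hw, hvw, fun hvw => not_preceq_of_mem_Deq hw hy (hvw ▸ hvy)⟩
  by_cases hxD : x ∈ Deq E X C
  · exact ⟨x, hxD, hvx⟩
  rcases exists_mem_or_reflTransGen_avoidingAdj_rev (S := Deq E X C) hvx with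
    ⟨w, hw, hvw, -⟩ | hup
  · exact ⟨w, hw, hvw⟩
  rcases exists_mem_or_reflTransGen_avoidingAdj (S := Deq E X C) hvy with
    ⟨w, hw, -, hwy⟩ | hdown
  · exact absurd hwy (not_preceq_of_mem_Deq hw hy)
  · exact absurd (hup.trans hdown) (hC.2.2 x hx y hy hxD)

theorem TightCluster.lt_of_isGreatest {T : V → ℝ} (hT : ∀ u v : V, precLT E u v → T u < T v)
    (hC : TightCluster E X C) {t : ℝ} (ht : IsGreatest (T '' Deq E X C) t) (hx : x ∈ C)
    (hy : y ∈ X \ C) (hvx : preceq E v x) (hvy : preceq E v y) : T v < t := by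
  obtain ⟨w, hw, hvw⟩ := hC.exists_mem_Deq_precLT hx hy hvx hvy
  exact (hT v w hvw).trans_le (ht.2 ⟨w, hw, rfl⟩)

end Clusters

theorem tight_is_apresjan_general [Fintype V] (E : V → V → Prop) (X : Set V)
    (T : V → ℝ) (hT : ∀ u v : V, precLT E u v → T u < T v)
    (C : Set V) (hC : TightCluster E X C) (hD : (Deq E X C).Nonempty) :
    ApresjanCluster E X T C ∧
    ∀ t : ℝ, IsGreatest (T '' Deq E X C) t →
      (∀ x ∈ C, ∀ y ∈ C, ∃ v : V, preceq E v x ∧ preceq E v y ∧ t ≤ T v) ∧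
      (∀ x ∈ C, ∀ y ∈ X \ C, ∀ v : V, preceq E v x → preceq E v y → T v < t) := by
  have conditions : ∀ t : ℝ, IsGreatest (T '' Deq E X C) t →
      (∀ x ∈ C, ∀ y ∈ C, ∃ v : V, preceq E v x ∧ preceq E v y ∧ t ≤ T v) ∧
      (∀ x ∈ C, ∀ y ∈ X \ C, ∀ v : V, preceq E v x → preceq E v y → T v < t) := by
    intro t ht
    obtain ⟨w, hw, rfl⟩ := ht.1
    exact ⟨fun x hx y hy => ⟨w, preceq_of_mem_Deq hw hx, preceq_of_mem_Deq hw hy, le_rfl⟩,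
      fun x hx y hy v hvx hvy => hC.lt_of_isGreatest hT ht hx hy hvx hvy⟩
  obtain ⟨w, hw, hmax⟩ := Set.exists_max_image _ T (Set.toFinite _) hD
  have ht : IsGreatest (T '' Deq E X C) (T w) :=
    ⟨⟨w, hw, rfl⟩, by rintro _ ⟨u, hu, rfl⟩; exact hmax u hu⟩
  exact ⟨⟨hC.2.1, T w, conditions _ ht⟩, conditions⟩

/-- For a valuated digraph (G,T) on X, a tight X-cluster C of G with
D(=C) ≠ ∅ is an Apresjan X-cluster relative to T; in fact, conditions (T1) and
(T2) hold for t = max{T(v) : v ∈ D(=C)}. -/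
theorem tight_is_apresjan [Fintype V] (E : V → V → Prop) (X : Set V)
    (hacyc : Irreflexive (Relation.TransGen E))
    (T : V → ℝ) (hT : ∀ u v : V, precLT E u v → T u < T v)
    (C : Set V) (hC : TightCluster E X C) (hD : (Deq E X C).Nonempty) :
    ApresjanCluster E X T C ∧
    ∀ t : ℝ, IsGreatest (T '' Deq E X C) t →
      (∀ x ∈ C, ∀ y ∈ C, ∃ v : V, preceq E v x ∧ preceq E v y ∧ t ≤ T v) ∧
      (∀ x ∈ C, ∀ y ∈ X \ C, ∀ v : V, preceq E v x → preceq E v y → T v < t) :=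
  tight_is_apresjan_general E X T hT C hC hD
end

section
/- If X is a finite nonempty set and H is a hierarchy on X that does not contain the empty set, then |H| ≤ 2|X|. -/
/-! Induction on the ground set `S`. If `S` is not the only member of `H`, take a member `A ≠ S`
that is maximal among those. By laminarity every other member lies inside `A`, is disjoint
from `A`, or is `S` itself, so `|H| ≤ (2|A| - 1) + (2|S \ A| - 1) + 1 = 2|S| - 1`. -/

open Finset

section

variable {α : Type*}

def IsLaminar (H : Finset (Finset α)) : Prop :=
  ∀ A ∈ H, ∀ B ∈ H, Disjoint A B ∨ A ⊆ B ∨ B ⊆ A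

namespace IsLaminar

variable {H H' : Finset (Finset α)} {S A B : Finset α}

lemma of_inter_eq [DecidableEq α] (hH : ∀ A ∈ H, ∀ B ∈ H, A ∩ B = ∅ ∨ A ∩ B = A ∨ A ∩ B = B) :
    IsLaminar H := fun A hA B hB => by
  simpa only [← disjoint_iff_inter_eq_empty, inter_eq_left, inter_eq_right] using hH A hA B hB

lemma mono (hH : IsLaminar H) (h : H' ⊆ H) : IsLaminar H' :=
  fun A hA B hB => hH A (h hA) B (h hB)

lemma subset_or_disjoint_or_eq_of_maximal (hH : IsLaminar H)
    (hA : Maximal (fun B => B ∈ H ∧ B ≠ S) A) (hB : B ∈ H) :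
    B ⊆ A ∨ Disjoint B A ∨ B = S := by
  rcases hH B hB A hA.prop.1 with hdisj | hBA | hAB
  · exact Or.inr (Or.inl hdisj)
  · exact Or.inl hBA
  · by_cases hBS : B = S
    · exact Or.inr (Or.inr hBS)
    · exact Or.inl (hA.le_of_ge ⟨hB, hBS⟩ hAB)

lemma card_le_card_filter_subset_add_card_filter_disjoint_add_one [DecidableEq α]
    (hH : IsLaminar H) (hA : Maximal (fun B => B ∈ H ∧ B ≠ S) A) :
    #H ≤ #(H.filter (· ⊆ A)) + #(H.filter (Disjoint · A)) + 1 := by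
  have hcover : H ⊆ H.filter (· ⊆ A) ∪ H.filter (Disjoint · A) ∪ {S} := by
    intro B hB
    rcases hH.subset_or_disjoint_or_eq_of_maximal hA hB with h | h | h <;> simp [hB, h]
  calc #H ≤ #(H.filter (· ⊆ A) ∪ H.filter (Disjoint · A) ∪ {S}) := card_le_card hcover
    _ ≤ #(H.filter (· ⊆ A) ∪ H.filter (Disjoint · A)) + #{S} := card_union_le _ _
    _ ≤ #(H.filter (· ⊆ A)) + #(H.filter (Disjoint · A)) + 1 := by
      grw [card_union_le, card_singleton]

theorem card_le_two_mul_card_sub_one [DecidableEq α] (hH : IsLaminar H) (hsub : ∀ A ∈ H, A ⊆ S)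
    (hempty : ∅ ∉ H) : #H ≤ 2 * #S - 1 := by
  induction S using Finset.strongInduction generalizing H with
  | _ S ih =>
  have nonempty_of_mem {B : Finset α} (hB : B ∈ H) : B.Nonempty :=
    nonempty_iff_ne_empty.mpr fun h => hempty (h ▸ hB)
  by_cases hS : H ⊆ {S}
  · rcases subset_singleton_iff.mp hS with rfl | rfl
    · simp
    · have := (nonempty_of_mem (mem_singleton_self S)).card_pos
      simp only [card_singleton]
      omega
  obtain ⟨A, hA⟩ : ∃ A, Maximal (fun B => B ∈ H ∧ B ≠ S) A := by
    obtain ⟨A, hA⟩ := (H.filter (· ≠ S)).exists_maximal <| by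
      simp only [subset_singleton_iff', not_forall] at hS
      simpa [Finset.Nonempty] using hS
    exact ⟨A, by simpa only [mem_filter] using hA⟩
  obtain ⟨hAH, hAS⟩ := hA.prop
  have hA_ssub : A ⊂ S := Finset.ssubset_iff_subset_ne.mpr ⟨hsub A hAH, hAS⟩
  have hAne := nonempty_of_mem hAH
  have ih_inside : #(H.filter (· ⊆ A)) ≤ 2 * #A - 1 :=
    ih A hA_ssub (hH.mono (filter_subset _ _)) (fun B hB => (mem_filter.mp hB).2)
      (fun h => hempty (mem_filter.mp h).1)
  have ih_outside : #(H.filter (Disjoint · A)) ≤ 2 * #(S \ A) - 1 := by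
    refine ih (S \ A) (sdiff_ssubset hA_ssub.subset hAne) (hH.mono (filter_subset _ _))
      (fun B hB => ?_) (fun h => hempty (mem_filter.mp h).1)
    obtain ⟨hBH, hBA⟩ := mem_filter.mp hB
    exact subset_sdiff.mpr ⟨hsub B hBH, hBA⟩
  have hcard := hH.card_le_card_filter_subset_add_card_filter_disjoint_add_one hA
  have hcard_sdiff := card_sdiff_of_subset hA_ssub.subset
  have hcard_lt := card_lt_card hA_ssub
  have hcard_pos := hAne.card_pos
  omega

end IsLaminar

end

theorem hierarchy_card_bound_general {X : Type*} [Fintype X] [DecidableEq X]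
    (H : Finset (Finset X))
    (hH : ∀ A ∈ H, ∀ B ∈ H, A ∩ B = ∅ ∨ A ∩ B = A ∨ A ∩ B = B)
    (hempty : ∅ ∉ H) :
    H.card ≤ 2 * Fintype.card X := by
  have := (IsLaminar.of_inter_eq hH).card_le_two_mul_card_sub_one
    (fun A _ => subset_univ A) hempty
  rw [card_univ] at this
  omega

/-- If X is a finite nonempty set and H is a hierarchy on X that does
not contain the empty set, then |H| ≤ 2|X|. -/
theorem hierarchy_card_bound {X : Type*} [Fintype X] [DecidableEq X]
    (hX : Nonempty X) (H : Finset (Finset X))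
    (hH : ∀ A ∈ H, ∀ B ∈ H, A ∩ B = ∅ ∨ A ∩ B = A ∨ A ∩ B = B)
    (hempty : ∅ ∉ H) :
    H.card ≤ 2 * Fintype.card X :=
  hierarchy_card_bound_general H hH hempty
end

section
/- If X is a finite set and H is a weak hierarchy on X that does not contain the empty set, then |H| ≤ (|X|+1 choose 2) = |X|(|X|+1)/2. -/
/-- If X is a finite set and H is a weak hierarchy on X that does not
contain the empty set, then |H| ≤ (|X|+1 choose 2) = |X|(|X|+1)/2. -/
theorem weak_hierarchy_card_bound {X : Type*} [Fintype X] [DecidableEq X]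
    (H : Finset (Finset X))
    (hH : ∀ A ∈ H, ∀ B ∈ H, ∀ C ∈ H,
      A ∩ B ∩ C = A ∩ B ∨ A ∩ B ∩ C = B ∩ C ∨ A ∩ B ∩ C = A ∩ C)
    (hempty : ∅ ∉ H) :
    H.card ≤ (Fintype.card X + 1).choose 2 := by
  classical
  -- I x y = intersection of all members of H containing x and y
  set I : X → X → Finset X :=
    fun x y => Finset.univ.filter (fun a => ∀ B ∈ H, x ∈ B → y ∈ B → a ∈ B) with hIdef
  have memI : ∀ x y a, a ∈ I x y ↔ ∀ B ∈ H, x ∈ B → y ∈ B → a ∈ B := by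
    intro x y a; simp [hIdef]
  have Isym : ∀ x y, I x y = I y x := by
    intro x y
    ext a
    rw [memI, memI]
    constructor <;> intro h B hB h1 h2 <;> exact h B hB h2 h1
  -- Key lemma: every A ∈ H is of the form I x y with x, y ∈ A
  have key : ∀ A ∈ H, ∃ x ∈ A, ∃ y ∈ A, I x y = A := by
    intro A hA
    have hAne : A.Nonempty := by
      rcases A.eq_empty_or_nonempty with h | h
      · exact absurd (h ▸ hA) hempty
      · exact h
    obtain ⟨p, hp, hmax⟩ := (A ×ˢ A).exists_max_image (fun p => (I p.1 p.2).card)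
      (hAne.product hAne)
    obtain ⟨hx, hy⟩ := Finset.mem_product.1 hp
    refine ⟨p.1, hx, p.2, hy, ?_⟩
    set x := p.1
    set y := p.2
    have hxI : x ∈ I x y := (memI x y x).2 (fun B _ h _ => h)
    have hyI : y ∈ I x y := (memI x y y).2 (fun B _ _ h => h)
    have hsub : I x y ⊆ A := fun a ha => (memI x y a).1 ha A hA hx hy
    by_contra hne
    obtain ⟨z, hzA, hzI⟩ := Finset.exists_of_ssubset (hsub.ssubset_of_ne hne)
    -- there is B ∈ H with x, y ∈ B, z ∉ B
    have hB' : ¬ ∀ B ∈ H, x ∈ B → y ∈ B → z ∈ B := fun h => hzI ((memI x y z).2 h)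
    push_neg at hB'
    obtain ⟨B, hB, hxB, hyB, hzB⟩ := hB'
    -- maximality prevents I x y ⊆ I x z and I x y ⊆ I y z
    have hns : ∀ w ∈ A, z ∈ I w z → (I w z).card ≤ (I x y).card → ¬ I x y ⊆ I w z := by
      intro w hwA hzw hcard hss
      have hstrict : I x y ⊂ I w z := ⟨hss, fun h2 => hzI (h2 hzw)⟩
      exact absurd (Finset.card_lt_card hstrict) (not_lt.2 hcard)
    have hns1 : ¬ I x y ⊆ I x z :=
      hns x hx ((memI x z z).2 (fun B _ _ h => h))
        (hmax (x, z) (Finset.mem_product.2 ⟨hx, hzA⟩))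
    have hns2 : ¬ I x y ⊆ I y z :=
      hns y hy ((memI y z z).2 (fun B _ _ h => h))
        (hmax (y, z) (Finset.mem_product.2 ⟨hy, hzA⟩))
    -- extract witnesses: u ∈ I x y with some C ∋ x,z, u ∉ C; v ∈ I x y with D ∋ y,z, v ∉ D
    obtain ⟨u, huI, huC⟩ := Finset.not_subset.1 hns1
    rw [memI] at huC
    push_neg at huC
    obtain ⟨C, hC, hxC, hzC, huC⟩ := huC
    obtain ⟨v, hvI, hvD⟩ := Finset.not_subset.1 hns2
    rw [memI] at hvD
    push_neg at hvD
    obtain ⟨D, hD, hyD, hzD, hvD⟩ := hvD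
    -- apply the weak hierarchy axiom to B, C, D
    rcases hH B hB C hC D hD with h | h | h
    · -- B ∩ C ⊆ D, so x ∈ D, hence v ∈ D
      have hxD : x ∈ D := by
        have : x ∈ B ∩ C ∩ D := by rw [h]; exact Finset.mem_inter.2 ⟨hxB, hxC⟩
        exact (Finset.mem_inter.1 this).2
      exact hvD ((memI x y v).1 hvI D hD hxD hyD)
    · -- C ∩ D ⊆ B, so z ∈ B
      have hzB' : z ∈ B := by
        have : z ∈ B ∩ C ∩ D := by rw [h]; exact Finset.mem_inter.2 ⟨hzC, hzD⟩
        exact (Finset.mem_inter.1 (Finset.mem_inter.1 this).1).1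
      exact hzB hzB'
    · -- B ∩ D ⊆ C, so y ∈ C, hence u ∈ C
      have hyC : y ∈ C := by
        have : y ∈ B ∩ C ∩ D := by rw [h]; exact Finset.mem_inter.2 ⟨hyB, hyD⟩
        exact (Finset.mem_inter.1 (Finset.mem_inter.1 this).1).2
      exact huC ((memI x y u).1 huI C hC hxC hyC)
  -- Now count: H injects into Sym2 X via the generating pairs
  let F : Sym2 X → Finset X := Sym2.lift ⟨I, Isym⟩
  have hHsub : H ⊆ Finset.univ.image F := by
    intro A hA
    obtain ⟨x, -, y, -, hxy⟩ := key A hA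
    exact Finset.mem_image.2 ⟨s(x, y), Finset.mem_univ _, by simpa [F] using hxy⟩
  calc H.card ≤ (Finset.univ.image F).card := Finset.card_le_card hHsub
    _ ≤ (Finset.univ : Finset (Sym2 X)).card := Finset.card_image_le
    _ = Fintype.card (Sym2 X) := Finset.card_univ
    _ = (Fintype.card X + 1).choose 2 := Sym2.card
end

section
/- The tight cluster construction satisfies sampling consistency: if Y ⊆ X, C is a tight X-cluster of G, and C ∩ Y ≠ ∅, then C ∩ Y is a tight Y-cluster of G (where G is now considered with distinguished subset Y in place of X). -/
/-
Restricting the distinguished set from `X` to `Y ⊆ X` can only shrink the descendant sets,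
`→v_Y = →v_X ∩ Y`, so every vertex of `D_X(=C)` lies in `D_Y(=C ∩ Y)`. A larger separator
separates smaller sets, and `C ∩ Y ⊆ C`, `Y − (C ∩ Y) ⊆ X − C`.
-/

open Relation

variable {V : Type*}

theorem desc_eq_desc_inter {E : V → V → Prop} {X Y : Set V} (hY : Y ⊆ X) (v : V) :
    desc E Y v = desc E X v ∩ Y := by
  ext z
  exact ⟨fun ⟨hz, hvz⟩ => ⟨⟨hY hz, hvz⟩, hz⟩, fun ⟨⟨_, hvz⟩, hz⟩ => ⟨hz, hvz⟩⟩

theorem Deq_subset_Deq_inter {E : V → V → Prop} {X Y : Set V} (hY : Y ⊆ X) (C : Set V) :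
    Deq E X C ⊆ Deq E Y (C ∩ Y) := by
  intro v hv
  change desc E X v = C at hv
  change desc E Y v = C ∩ Y
  rw [desc_eq_desc_inter hY, hv]

theorem Separates.mono {E : V → V → Prop} {S S' A A' B B' : Set V}
    (h : Separates E S A B) (hS : S ⊆ S') (hA : A' ⊆ A) (hB : B' ⊆ B) :
    Separates E S' A' B' := by
  intro x hx y hy hxS hpath
  exact h x (hA hx) y (hB hy) (fun hx' => hxS (hS hx'))
    (ReflTransGen.mono (fun _ _ ⟨huv, hv⟩ => ⟨huv, fun hv' => hv (hS hv')⟩) _ _ hpath)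

theorem tight_sampling_consistency_general (E : V → V → Prop) (X : Set V)
    (Y : Set V) (hY : Y ⊆ X)
    (C : Set V) (hC : TightCluster E X C) (hCY : (C ∩ Y).Nonempty) :
    TightCluster E Y (C ∩ Y) := by
  obtain ⟨-, -, hsep⟩ := hC
  have hcompl : Y \ (C ∩ Y) ⊆ X \ C := fun y ⟨hy, hyC⟩ => ⟨hY hy, fun hc => hyC ⟨hc, hy⟩⟩
  exact ⟨hCY, Set.inter_subset_right,
    hsep.mono (Deq_subset_Deq_inter hY C) Set.inter_subset_left hcompl⟩

/-- Sampling consistency for tight clusters: if Y ⊆ X, C is a tight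
X-cluster of G, and C ∩ Y ≠ ∅, then C ∩ Y is a tight Y-cluster of G. -/
theorem tight_sampling_consistency [Fintype V] (E : V → V → Prop) (X : Set V)
    (hacyc : Irreflexive (Relation.TransGen E))
    (Y : Set V) (hY : Y ⊆ X)
    (C : Set V) (hC : TightCluster E X C) (hCY : (C ∩ Y).Nonempty) :
    TightCluster E Y (C ∩ Y) :=
  tight_sampling_consistency_general E X Y hY C hC hCY
end
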